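/- arXiv:2003.10255 — 3 statements merged into one kernel-verified Lean document; each statement's English description precedes it below -/
import Mathlib

section
/- Let $(L,\leq,0,1)$ be a bounded lattice, $e\in L\setminus\{0,1\}$, $I_e=\{x: x\parallel e\}$, and let $T_e$ be a t-norm on $[0,e]$. Define $U_t$ by: $T_e(x,y)$ on $[0,e]^2$; $x\vee y$ on $([0,e]\times(e,1])\cup((e,1]\times[0,e])\cup(I_e\times I_e)$; $y$ on $[0,e]\times I_e$; $x$ on $I_e\times[0,e]$; $1$ otherwise. Then $U_t$ is a uninorm on $L$ with neutral element $e$ if and only if $\{y\vee z: y,z\in I_e\}\subseteq I_e\cup\{1\}$. -/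
/-!
Regroup `U_t` by whether the arguments lie in `[0, e]`: there it is `T_e`; an element of `[0, e]`
acts as the identity on everything outside `[0, e]`; and two elements outside `[0, e]` are sent to
`x ⊔ y` if both lie in `I_e` and to `⊤` otherwise. Since `e ≠ ⊤`, the complement of `[0, e]` is
closed under this last operation, so associativity of `U_t` reduces to that of `T_e` and of the last
operation. Under the lattice condition the latter sends `(x, y, z)` in either bracketing to
`x ⊔ y ⊔ z` if all three lie in `I_e` and to `⊤` otherwise. Conversely, for `y, z ∈ I_e` the
instance `U(U(y, z), z) = U(y, U(z, z))` reads `U(y ⊔ z, z) = y ⊔ z`, which forces `y ⊔ z ∈ I_e` or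
`y ⊔ z = ⊤`.
-/

section UninormOfTNorm

variable {L : Type*} [Lattice L] [BoundedOrder L] {e : L}

open Classical

noncomputable def incompSupOrTop (e x y : L) : L :=
  if IncompRel (· ≤ ·) x e ∧ IncompRel (· ≤ ·) y e then x ⊔ y else ⊤

def IncompSupIncompOrTop (e : L) : Prop :=
  ∀ y z : L, IncompRel (· ≤ ·) y e → IncompRel (· ≤ ·) z e →
    IncompRel (· ≤ ·) (y ⊔ z) e ∨ y ⊔ z = ⊤

noncomputable def uninormOfTNorm (e : L) (T : L → L → L) (x y : L) : L :=
  if x ≤ e then (if y ≤ e then T x y else y)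
  else if y ≤ e then x else incompSupOrTop e x y

theorem incompSupOrTop_comm (x y : L) : incompSupOrTop e x y = incompSupOrTop e y x := by
  unfold incompSupOrTop
  rw [sup_comm]
  exact if_congr and_comm rfl rfl

theorem incompSupOrTop_top_left (y : L) : incompSupOrTop e ⊤ y = ⊤ := by
  simp [incompSupOrTop, IncompRel]

theorem le_incompSupOrTop_right (x y : L) : y ≤ incompSupOrTop e x y := by
  unfold incompSupOrTop
  split_ifs
  exacts [le_sup_right, le_top]

theorem not_incompSupOrTop_le (he : e ≠ ⊤) {x : L} (hx : ¬ x ≤ e) (y : L) :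
    ¬ incompSupOrTop e x y ≤ e := by
  unfold incompSupOrTop
  split_ifs
  exacts [fun h => hx (le_sup_left.trans h), fun h => he (top_le_iff.mp h)]

theorem incompSupOrTop_mono_left {x y : L} (hx : ¬ x ≤ e) (hxy : x ≤ y) (z : L) :
    incompSupOrTop e x z ≤ incompSupOrTop e y z := by
  by_cases hyz : IncompRel (· ≤ ·) y e ∧ IncompRel (· ≤ ·) z e
  · have hxz : IncompRel (· ≤ ·) x e ∧ IncompRel (· ≤ ·) z e :=
      ⟨⟨hx, fun h => hyz.1.2 (h.trans hxy)⟩, hyz.2⟩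
    simp only [incompSupOrTop, if_pos hxz, if_pos hyz]
    exact sup_le_sup_right hxy z
  · simp only [incompSupOrTop, if_neg hyz, le_top]

theorem incompSupOrTop_incompSupOrTop
    (hI : IncompSupIncompOrTop e) (x y z : L) :
    incompSupOrTop e (incompSupOrTop e x y) z =
      if IncompRel (· ≤ ·) x e ∧ IncompRel (· ≤ ·) y e ∧ IncompRel (· ≤ ·) z e
      then x ⊔ y ⊔ z else ⊤ := by
  by_cases hxy : IncompRel (· ≤ ·) x e ∧ IncompRel (· ≤ ·) y e
  · have hW : incompSupOrTop e x y = x ⊔ y := if_pos hxy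
    rw [hW]
    rcases hI x y hxy.1 hxy.2 with hsup | hsup
    · simp only [incompSupOrTop, hsup, hxy.1, hxy.2, true_and]
    · simp only [hsup, top_sup_eq, incompSupOrTop_top_left, ite_self]
  · have hW : incompSupOrTop e x y = ⊤ := if_neg hxy
    rw [hW, incompSupOrTop_top_left, if_neg (by tauto)]

theorem incompSupOrTop_assoc
    (hI : IncompSupIncompOrTop e) (x y z : L) :
    incompSupOrTop e (incompSupOrTop e x y) z = incompSupOrTop e x (incompSupOrTop e y z) := by
  rw [incompSupOrTop_comm x (incompSupOrTop e y z), incompSupOrTop_incompSupOrTop hI,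
    incompSupOrTop_incompSupOrTop hI]
  exact if_congr (by tauto) (by ac_rfl) rfl

variable {T : L → L → L} {x y : L}

theorem uninormOfTNorm_of_le_of_le (hx : x ≤ e) (hy : y ≤ e) :
    uninormOfTNorm e T x y = T x y := by
  simp [uninormOfTNorm, hx, hy]

theorem uninormOfTNorm_of_le_of_not_le (hx : x ≤ e) (hy : ¬ y ≤ e) :
    uninormOfTNorm e T x y = y := by
  simp [uninormOfTNorm, hx, hy]

theorem uninormOfTNorm_of_not_le_of_le (hx : ¬ x ≤ e) (hy : y ≤ e) :
    uninormOfTNorm e T x y = x := by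
  simp [uninormOfTNorm, hx, hy]

theorem uninormOfTNorm_of_not_le_of_not_le (hx : ¬ x ≤ e) (hy : ¬ y ≤ e) :
    uninormOfTNorm e T x y = incompSupOrTop e x y := by
  simp [uninormOfTNorm, hx, hy]

theorem uninormOfTNorm_comm (hTcomm : ∀ x y, x ≤ e → y ≤ e → T x y = T y x) (x y : L) :
    uninormOfTNorm e T x y = uninormOfTNorm e T y x := by
  unfold uninormOfTNorm
  split_ifs <;> first | rfl | exact hTcomm _ _ ‹_› ‹_› | exact incompSupOrTop_comm _ _

theorem uninormOfTNorm_neutral_left (hTe : ∀ x, x ≤ e → T e x = x ∧ T x e = x) (x : L) :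
    uninormOfTNorm e T e x = x := by
  by_cases hx : x ≤ e
  · rw [uninormOfTNorm_of_le_of_le le_rfl hx, (hTe x hx).1]
  · rw [uninormOfTNorm_of_le_of_not_le le_rfl hx]

theorem uninormOfTNorm_neutral_right (hTe : ∀ x, x ≤ e → T e x = x ∧ T x e = x) (x : L) :
    uninormOfTNorm e T x e = x := by
  by_cases hx : x ≤ e
  · rw [uninormOfTNorm_of_le_of_le hx le_rfl, (hTe x hx).2]
  · rw [uninormOfTNorm_of_not_le_of_le hx le_rfl]

theorem uninormOfTNorm_mono_left
    (hTcomm : ∀ x y, x ≤ e → y ≤ e → T x y = T y x)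
    (hTmono : ∀ x y z, x ≤ e → y ≤ e → z ≤ e → x ≤ y → T x z ≤ T y z)
    (hTe : ∀ x, x ≤ e → T e x = x ∧ T x e = x) (hxy : x ≤ y) (z : L) :
    uninormOfTNorm e T x z ≤ uninormOfTNorm e T y z := by
  by_cases hy : y ≤ e
  · have hx := hxy.trans hy
    by_cases hz : z ≤ e
    · rw [uninormOfTNorm_of_le_of_le hx hz, uninormOfTNorm_of_le_of_le hy hz]
      exact hTmono x y z hx hy hz hxy
    · rw [uninormOfTNorm_of_le_of_not_le hx hz, uninormOfTNorm_of_le_of_not_le hy hz]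
  by_cases hx : x ≤ e <;> by_cases hz : z ≤ e
  · rw [uninormOfTNorm_of_le_of_le hx hz, uninormOfTNorm_of_not_le_of_le hy hz]
    calc T x z = T z x := hTcomm x z hx hz
      _ ≤ T e x := hTmono z e x hz le_rfl hx hz
      _ = x := (hTe x hx).1
      _ ≤ y := hxy
  · rw [uninormOfTNorm_of_le_of_not_le hx hz, uninormOfTNorm_of_not_le_of_not_le hy hz]
    exact le_incompSupOrTop_right y z
  · rwa [uninormOfTNorm_of_not_le_of_le hx hz, uninormOfTNorm_of_not_le_of_le hy hz]
  · rw [uninormOfTNorm_of_not_le_of_not_le hx hz, uninormOfTNorm_of_not_le_of_not_le hy hz]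
    exact incompSupOrTop_mono_left hx hxy z

theorem uninormOfTNorm_assoc (he : e ≠ ⊤)
    (hTcl : ∀ x y, x ≤ e → y ≤ e → T x y ≤ e)
    (hTassoc : ∀ x y z, x ≤ e → y ≤ e → z ≤ e → T (T x y) z = T x (T y z))
    (hI : IncompSupIncompOrTop e) (x y z : L) :
    uninormOfTNorm e T (uninormOfTNorm e T x y) z =
      uninormOfTNorm e T x (uninormOfTNorm e T y z) := by
  by_cases hx : x ≤ e <;> by_cases hy : y ≤ e <;> by_cases hz : z ≤ e <;>
    simp [uninormOfTNorm, hx, hy, hz, hTcl, hTassoc, not_incompSupOrTop_le he,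
      incompSupOrTop_assoc hI]

theorem incompSupIncompOrTop_of_assoc
    (hassoc : ∀ x y z, uninormOfTNorm e T (uninormOfTNorm e T x y) z =
      uninormOfTNorm e T x (uninormOfTNorm e T y z)) :
    IncompSupIncompOrTop e := by
  intro y z hy hz
  have hyz : uninormOfTNorm e T y z = y ⊔ z := by
    rw [uninormOfTNorm_of_not_le_of_not_le hy.1 hz.1]; exact if_pos ⟨hy, hz⟩
  have hzz : uninormOfTNorm e T z z = z := by
    rw [uninormOfTNorm_of_not_le_of_not_le hz.1 hz.1]; simp [incompSupOrTop, hz]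
  have h := hassoc y z z
  rw [hzz, hyz, uninormOfTNorm_of_not_le_of_not_le (fun h => hy.1 (le_sup_left.trans h)) hz.1]
    at h
  by_cases hsup : IncompRel (· ≤ ·) (y ⊔ z) e
  · exact Or.inl hsup
  · exact Or.inr (by rw [← h, incompSupOrTop, if_neg (fun h => hsup h.1)])

-- The case distinction defining `U_t` in the paper.
theorem uninormOfTNorm_apply (T : L → L → L) (x y : L) :
    uninormOfTNorm e T x y =
      if x ≤ e ∧ y ≤ e then T x y
      else if (x ≤ e ∧ e < y) ∨ (e < x ∧ y ≤ e) ∨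
          ((¬ x ≤ e ∧ ¬ e ≤ x) ∧ (¬ y ≤ e ∧ ¬ e ≤ y)) then x ⊔ y
      else if x ≤ e ∧ (¬ y ≤ e ∧ ¬ e ≤ y) then y
      else if (¬ x ≤ e ∧ ¬ e ≤ x) ∧ y ≤ e then x
      else (⊤ : L) := by
  by_cases hx : x ≤ e <;> by_cases hy : y ≤ e <;>
    simp [uninormOfTNorm, incompSupOrTop, IncompRel, lt_iff_le_not_ge, hx, hy]
  · split_ifs with hey
    exacts [(sup_eq_right.2 (hx.trans hey)).symm, rfl]
  · split_ifs with hex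
    exacts [(sup_eq_left.2 (hy.trans hex)).symm, rfl]

end UninormOfTNorm

open Classical in
theorem stmt6_general {L : Type*} [Lattice L] [BoundedOrder L] (e : L)
    (he1 : e ≠ ⊤)
    (T : L → L → L)
    (hTcl : ∀ x y, x ≤ e → y ≤ e → T x y ≤ e)
    (hTcomm : ∀ x y, x ≤ e → y ≤ e → T x y = T y x)
    (hTassoc : ∀ x y z, x ≤ e → y ≤ e → z ≤ e → T (T x y) z = T x (T y z))
    (hTmono : ∀ x y z, x ≤ e → y ≤ e → z ≤ e → x ≤ y → T x z ≤ T y z)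
    (hTe : ∀ x, x ≤ e → T e x = x ∧ T x e = x)
    (U : L → L → L)
    (hU : ∀ x y, U x y =
      if x ≤ e ∧ y ≤ e then T x y
      else if (x ≤ e ∧ e < y) ∨ (e < x ∧ y ≤ e) ∨
          ((¬ x ≤ e ∧ ¬ e ≤ x) ∧ (¬ y ≤ e ∧ ¬ e ≤ y)) then x ⊔ y
      else if x ≤ e ∧ (¬ y ≤ e ∧ ¬ e ≤ y) then y
      else if (¬ x ≤ e ∧ ¬ e ≤ x) ∧ y ≤ e then x
      else (⊤ : L)) :
    ((∀ x y, U x y = U y x) ∧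
      (∀ x y z, U (U x y) z = U x (U y z)) ∧
      (∀ x y z, x ≤ y → U x z ≤ U y z ∧ U z x ≤ U z y) ∧
      (∀ x, U e x = x ∧ U x e = x)) ↔
    (∀ y z, (¬ y ≤ e ∧ ¬ e ≤ y) → (¬ z ≤ e ∧ ¬ e ≤ z) →
      (¬ y ⊔ z ≤ e ∧ ¬ e ≤ y ⊔ z) ∨ y ⊔ z = ⊤) := by
  obtain rfl : U = uninormOfTNorm e T :=
    funext₂ fun x y => (hU x y).trans (uninormOfTNorm_apply T x y).symm
  have hcomm := uninormOfTNorm_comm hTcomm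
  have hmono {x y : L} (hxy : x ≤ y) (z : L) :=
    uninormOfTNorm_mono_left hTcomm hTmono hTe hxy z
  refine ⟨fun ⟨_, hassoc, _, _⟩ => incompSupIncompOrTop_of_assoc hassoc, fun hI => ?_⟩
  refine ⟨hcomm, uninormOfTNorm_assoc he1 hTcl hTassoc hI, fun x y z hxy => ⟨hmono hxy z, ?_⟩,
    fun x => ⟨uninormOfTNorm_neutral_left hTe x, uninormOfTNorm_neutral_right hTe x⟩⟩
  rw [hcomm z x, hcomm z y]
  exact hmono hxy z

open Classical in
theorem stmt6 {L : Type*} [Lattice L] [BoundedOrder L] (e : L)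
    (he0 : e ≠ ⊥) (he1 : e ≠ ⊤)
    (T : L → L → L)
    (hTcl : ∀ x y, x ≤ e → y ≤ e → T x y ≤ e)
    (hTcomm : ∀ x y, x ≤ e → y ≤ e → T x y = T y x)
    (hTassoc : ∀ x y z, x ≤ e → y ≤ e → z ≤ e → T (T x y) z = T x (T y z))
    (hTmono : ∀ x y z, x ≤ e → y ≤ e → z ≤ e → x ≤ y → T x z ≤ T y z)
    (hTe : ∀ x, x ≤ e → T e x = x ∧ T x e = x)
    (U : L → L → L)
    (hU : ∀ x y, U x y =
      if x ≤ e ∧ y ≤ e then T x y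
      else if (x ≤ e ∧ e < y) ∨ (e < x ∧ y ≤ e) ∨
          ((¬ x ≤ e ∧ ¬ e ≤ x) ∧ (¬ y ≤ e ∧ ¬ e ≤ y)) then x ⊔ y
      else if x ≤ e ∧ (¬ y ≤ e ∧ ¬ e ≤ y) then y
      else if (¬ x ≤ e ∧ ¬ e ≤ x) ∧ y ≤ e then x
      else (⊤ : L)) :
    ((∀ x y, U x y = U y x) ∧
      (∀ x y z, U (U x y) z = U x (U y z)) ∧
      (∀ x y z, x ≤ y → U x z ≤ U y z ∧ U z x ≤ U z y) ∧
      (∀ x, U e x = x ∧ U x e = x)) ↔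
    (∀ y z, (¬ y ≤ e ∧ ¬ e ≤ y) → (¬ z ≤ e ∧ ¬ e ≤ z) →
      (¬ y ⊔ z ≤ e ∧ ¬ e ≤ y ⊔ z) ∨ y ⊔ z = ⊤) :=
  stmt6_general e he1 T hTcl hTcomm hTassoc hTmono hTe U hU
end

section
/- Let $(L,\leq,0,1)$ be a bounded lattice, $e\in L\setminus\{0,1\}$, $I_e=\{x: x\parallel e\}$, and let $S_e$ be a t-conorm on $[e,1]$. Define $U_s(x,y)=S_e(x,y)$ on $[e,1]^2$; $x\wedge y$ on $([0,e)\times[e,1])\cup([e,1]\times[0,e))\cup(I_e\times I_e)$; $y$ on $[e,1]\times I_e$; $x$ on $I_e\times[e,1]$; $0$ otherwise. Then $U_s$ is a uninorm on $L$ with neutral element $e$ if and only if $\{y\wedge z: y,z\in I_e\}\subseteq I_e\cup\{0\}$. -/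
/-! Let `A = [e, ⊤]` and `D = L \ A`, a down-set containing `[⊥, e)` and `I_e`. Under the condition,
`U_s` is the gluing of `S_e` on `A` with the truncated meet `(x, y) ↦ if x ⊓ y ≤ e then ⊥ else x ⊓ y`
on `D`, where `A` acts as the identity on `D`. The truncated meet is associative on any lattice, and
such a gluing of associative, commutative, monotone operations is again one.
Conversely, for `y, z ∈ I_e` with `y ⊓ z < e`, associativity gives
`y ⊓ z = U(y, U(z, z)) = U(U(y, z), z) = U(y ⊓ z, z) = ⊥`. -/

section Glue

variable {α : Type*} [Preorder α] {e : α} {S T : α → α → α}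

variable (e S T) in
open Classical in
noncomputable def uninormGlue (x y : α) : α :=
  if e ≤ x then (if e ≤ y then S x y else y) else if e ≤ y then x else T x y

theorem left_le_of_neutral_of_mono (hScomm : ∀ x y, e ≤ x → e ≤ y → S x y = S y x)
    (hSmono : ∀ x y z, e ≤ x → e ≤ y → e ≤ z → x ≤ y → S x z ≤ S y z)
    (hSe : ∀ x, e ≤ x → S e x = x ∧ S x e = x) {x y : α} (hx : e ≤ x) (hy : e ≤ y) :
    x ≤ S x y :=
  calc x = S e x := (hSe x hx).1.symm
    _ ≤ S y x := hSmono e y x le_rfl hy hx hy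
    _ = S x y := hScomm y x hy hx

theorem uninormGlue_comm
    (hScomm : ∀ x y, e ≤ x → e ≤ y → S x y = S y x)
    (hTcomm : ∀ x y, ¬ e ≤ x → ¬ e ≤ y → T x y = T y x) (x y : α) :
    uninormGlue e S T x y = uninormGlue e S T y x := by
  by_cases hx : e ≤ x <;> by_cases hy : e ≤ y <;> simp [uninormGlue, *]

theorem uninormGlue_assoc
    (hScl : ∀ x y, e ≤ x → e ≤ y → e ≤ S x y)
    (hSassoc : ∀ x y z, e ≤ x → e ≤ y → e ≤ z → S (S x y) z = S x (S y z))
    (hTcl : ∀ x y, ¬ e ≤ x → ¬ e ≤ y → ¬ e ≤ T x y)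
    (hTassoc : ∀ x y z, ¬ e ≤ x → ¬ e ≤ y → ¬ e ≤ z → T (T x y) z = T x (T y z))
    (x y z : α) :
    uninormGlue e S T (uninormGlue e S T x y) z = uninormGlue e S T x (uninormGlue e S T y z) := by
  by_cases hx : e ≤ x <;> by_cases hy : e ≤ y <;> by_cases hz : e ≤ z <;>
    simp [uninormGlue, *]

theorem uninormGlue_mono_left
    (hSmono : ∀ x y z, e ≤ x → e ≤ y → e ≤ z → x ≤ y → S x z ≤ S y z)
    (hS_left_le : ∀ x y, e ≤ x → e ≤ y → x ≤ S x y)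
    (hTmono : ∀ x y z, ¬ e ≤ x → ¬ e ≤ y → ¬ e ≤ z → x ≤ y → T x z ≤ T y z)
    (hT_le_right : ∀ x y, ¬ e ≤ x → ¬ e ≤ y → T x y ≤ y)
    {x y : α} (hxy : x ≤ y) (z : α) :
    uninormGlue e S T x z ≤ uninormGlue e S T y z := by
  by_cases hy : e ≤ y
  · have hS_ge_x : e ≤ z → x ≤ S y z := fun hz => hxy.trans (hS_left_le y z hy hz)
    by_cases hx : e ≤ x <;> by_cases hz : e ≤ z <;> simp [uninormGlue, *]
  · have hx : ¬ e ≤ x := fun hx => hy (hx.trans hxy)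
    by_cases hz : e ≤ z <;> simp [uninormGlue, *]

theorem uninormGlue_neutral (hSe : ∀ x, e ≤ x → S e x = x ∧ S x e = x) (x : α) :
    uninormGlue e S T e x = x ∧ uninormGlue e S T x e = x := by
  by_cases hx : e ≤ x <;> simp [uninormGlue, *]

end Glue

section Lattice

variable {L : Type*} [Lattice L] [OrderBot L]

open Classical in
noncomputable def truncInf (e x y : L) : L := if x ⊓ y ≤ e then ⊥ else x ⊓ y

theorem truncInf_comm (e x y : L) : truncInf e x y = truncInf e y x := by
  rw [truncInf, truncInf, inf_comm]

theorem truncInf_le_inf (e x y : L) : truncInf e x y ≤ x ⊓ y := by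
  unfold truncInf; split_ifs <;> simp

theorem not_le_truncInf {e x : L} (hx : ¬ e ≤ x) (y : L) : ¬ e ≤ truncInf e x y :=
  fun h => hx (h.trans ((truncInf_le_inf e x y).trans inf_le_left))

theorem truncInf_of_le {e x y : L} (h : x ⊓ y ≤ e) : truncInf e x y = ⊥ := if_pos h

theorem truncInf_of_not_le {e x y : L} (h : ¬ x ⊓ y ≤ e) : truncInf e x y = x ⊓ y := if_neg h

theorem truncInf_truncInf_left (e x y z : L) :
    truncInf e (truncInf e x y) z = truncInf e (x ⊓ y) z := by
  by_cases h : x ⊓ y ≤ e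
  · rw [truncInf_of_le h, truncInf_of_le (by simp), truncInf_of_le (inf_le_left.trans h)]
  · rw [truncInf_of_not_le h]

theorem truncInf_assoc (e x y z : L) :
    truncInf e (truncInf e x y) z = truncInf e x (truncInf e y z) := by
  rw [truncInf_truncInf_left, truncInf_comm e x, truncInf_truncInf_left]
  unfold truncInf
  rw [show x ⊓ y ⊓ z = y ⊓ z ⊓ x by ac_rfl]

theorem truncInf_mono_left (e : L) {x y : L} (hxy : x ≤ y) (z : L) :
    truncInf e x z ≤ truncInf e y z := by
  by_cases hx : x ⊓ z ≤ e
  · exact (truncInf_of_le hx).trans_le bot_le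
  · have hxz : x ⊓ z ≤ y ⊓ z := inf_le_inf_right z hxy
    rw [truncInf_of_not_le hx, truncInf_of_not_le fun hy => hx (hxz.trans hy)]
    exact hxz

end Lattice

section TConormUninorm

variable {L : Type*} [Lattice L] [BoundedOrder L] {e : L} {S : L → L → L}

variable (e S) in
open Classical in
noncomputable def tconormUninorm (x y : L) : L :=
  if e ≤ x ∧ e ≤ y then S x y
  else if (x < e ∧ e ≤ y) ∨ (e ≤ x ∧ y < e) ∨
      ((¬ x ≤ e ∧ ¬ e ≤ x) ∧ (¬ y ≤ e ∧ ¬ e ≤ y)) then x ⊓ y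
  else if e ≤ x ∧ (¬ y ≤ e ∧ ¬ e ≤ y) then y
  else if (¬ x ≤ e ∧ ¬ e ≤ x) ∧ e ≤ y then x
  else (⊥ : L)

theorem tconormUninorm_of_incomp_of_incomp {x y : L} (hx : ¬ x ≤ e ∧ ¬ e ≤ x)
    (hy : ¬ y ≤ e ∧ ¬ e ≤ y) : tconormUninorm e S x y = x ⊓ y := by
  simp [tconormUninorm, hx, hy]

theorem tconormUninorm_of_lt_of_incomp {x y : L} (hx : x < e) (hy : ¬ y ≤ e ∧ ¬ e ≤ y) :
    tconormUninorm e S x y = ⊥ := by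
  simp [tconormUninorm, hx, hy, hx.le, hx.not_ge]

theorem inf_incomp_or_eq_bot_of_tconormUninorm_assoc
    (hassoc : ∀ x y z, tconormUninorm e S (tconormUninorm e S x y) z =
      tconormUninorm e S x (tconormUninorm e S y z))
    {y z : L} (hy : ¬ y ≤ e ∧ ¬ e ≤ y) (hz : ¬ z ≤ e ∧ ¬ e ≤ z) :
    (¬ y ⊓ z ≤ e ∧ ¬ e ≤ y ⊓ z) ∨ y ⊓ z = ⊥ := by
  have hyz_ge : ¬ e ≤ y ⊓ z := fun h => hy.2 (h.trans inf_le_left)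
  by_cases hyz_le : y ⊓ z ≤ e
  · right
    have h := hassoc y z z
    rwa [tconormUninorm_of_incomp_of_incomp hz hz, inf_idem,
      tconormUninorm_of_incomp_of_incomp hy hz,
      tconormUninorm_of_lt_of_incomp (lt_of_le_not_ge hyz_le hyz_ge) hz, eq_comm] at h
  · exact Or.inl ⟨hyz_le, hyz_ge⟩

theorem tconormUninorm_eq_uninormGlue
    (H : ∀ y z, (¬ y ≤ e ∧ ¬ e ≤ y) → (¬ z ≤ e ∧ ¬ e ≤ z) →
      (¬ y ⊓ z ≤ e ∧ ¬ e ≤ y ⊓ z) ∨ y ⊓ z = ⊥) :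
    tconormUninorm e S = uninormGlue e S (truncInf e) := by
  funext x y
  unfold tconormUninorm uninormGlue truncInf
  -- on `I_e × I_e` the two sides are `x ⊓ y` and its truncation, which agree by `H`
  split_ifs <;> grind [inf_le_left, inf_le_right, inf_eq_left, inf_eq_right, lt_iff_le_not_ge]

end TConormUninorm

open Classical in
theorem stmt8_general {L : Type*} [Lattice L] [BoundedOrder L] (e : L)
    (S : L → L → L)
    (hScl : ∀ x y, e ≤ x → e ≤ y → e ≤ S x y)
    (hScomm : ∀ x y, e ≤ x → e ≤ y → S x y = S y x)
    (hSassoc : ∀ x y z, e ≤ x → e ≤ y → e ≤ z → S (S x y) z = S x (S y z))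
    (hSmono : ∀ x y z, e ≤ x → e ≤ y → e ≤ z → x ≤ y → S x z ≤ S y z)
    (hSe : ∀ x, e ≤ x → S e x = x ∧ S x e = x)
    (U : L → L → L)
    (hU : ∀ x y, U x y =
      if e ≤ x ∧ e ≤ y then S x y
      else if (x < e ∧ e ≤ y) ∨ (e ≤ x ∧ y < e) ∨
          ((¬ x ≤ e ∧ ¬ e ≤ x) ∧ (¬ y ≤ e ∧ ¬ e ≤ y)) then x ⊓ y
      else if e ≤ x ∧ (¬ y ≤ e ∧ ¬ e ≤ y) then y
      else if (¬ x ≤ e ∧ ¬ e ≤ x) ∧ e ≤ y then x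
      else (⊥ : L)) :
    ((∀ x y, U x y = U y x) ∧
      (∀ x y z, U (U x y) z = U x (U y z)) ∧
      (∀ x y z, x ≤ y → U x z ≤ U y z ∧ U z x ≤ U z y) ∧
      (∀ x, U e x = x ∧ U x e = x)) ↔
    (∀ y z, (¬ y ≤ e ∧ ¬ e ≤ y) → (¬ z ≤ e ∧ ¬ e ≤ z) →
      (¬ y ⊓ z ≤ e ∧ ¬ e ≤ y ⊓ z) ∨ y ⊓ z = ⊥) := by
  obtain rfl : U = tconormUninorm e S := funext fun x => funext (hU x)
  constructor
  · rintro ⟨-, hassoc, -, -⟩ y z hy hz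
    exact inf_incomp_or_eq_bot_of_tconormUninorm_assoc hassoc hy hz
  · intro H
    rw [tconormUninorm_eq_uninormGlue H]
    have hcomm := uninormGlue_comm hScomm fun x y _ _ => truncInf_comm e x y
    have hmono {x y : L} (hxy : x ≤ y) (z : L) :
        uninormGlue e S (truncInf e) x z ≤ uninormGlue e S (truncInf e) y z :=
      uninormGlue_mono_left hSmono (fun _ _ => left_le_of_neutral_of_mono hScomm hSmono hSe)
        (fun _ _ c _ _ _ h => truncInf_mono_left e h c)
        (fun a b _ _ => (truncInf_le_inf e a b).trans inf_le_right) hxy z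
    have hassoc := uninormGlue_assoc hScl hSassoc (fun x y hx _ => not_le_truncInf hx y)
      fun x y z _ _ _ => truncInf_assoc e x y z
    refine ⟨hcomm, hassoc, fun x y z hxy => ⟨hmono hxy z, ?_⟩, uninormGlue_neutral hSe⟩
    rw [hcomm z x, hcomm z y]
    exact hmono hxy z

open Classical in
theorem stmt8 {L : Type*} [Lattice L] [BoundedOrder L] (e : L)
    (he0 : e ≠ ⊥) (he1 : e ≠ ⊤)
    (S : L → L → L)
    (hScl : ∀ x y, e ≤ x → e ≤ y → e ≤ S x y)
    (hScomm : ∀ x y, e ≤ x → e ≤ y → S x y = S y x)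
    (hSassoc : ∀ x y z, e ≤ x → e ≤ y → e ≤ z → S (S x y) z = S x (S y z))
    (hSmono : ∀ x y z, e ≤ x → e ≤ y → e ≤ z → x ≤ y → S x z ≤ S y z)
    (hSe : ∀ x, e ≤ x → S e x = x ∧ S x e = x)
    (U : L → L → L)
    (hU : ∀ x y, U x y =
      if e ≤ x ∧ e ≤ y then S x y
      else if (x < e ∧ e ≤ y) ∨ (e ≤ x ∧ y < e) ∨
          ((¬ x ≤ e ∧ ¬ e ≤ x) ∧ (¬ y ≤ e ∧ ¬ e ≤ y)) then x ⊓ y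
      else if e ≤ x ∧ (¬ y ≤ e ∧ ¬ e ≤ y) then y
      else if (¬ x ≤ e ∧ ¬ e ≤ x) ∧ e ≤ y then x
      else (⊥ : L)) :
    ((∀ x y, U x y = U y x) ∧
      (∀ x y z, U (U x y) z = U x (U y z)) ∧
      (∀ x y z, x ≤ y → U x z ≤ U y z ∧ U z x ≤ U z y) ∧
      (∀ x, U e x = x ∧ U x e = x)) ↔
    (∀ y z, (¬ y ≤ e ∧ ¬ e ≤ y) → (¬ z ≤ e ∧ ¬ e ≤ z) →
      (¬ y ⊓ z ≤ e ∧ ¬ e ≤ y ⊓ z) ∨ y ⊓ z = ⊥) :=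
  stmt8_general e S hScl hScomm hSassoc hSmono hSe U hU
end

section
/- Let $(L,\leq,0,1)$ be a bounded lattice, $e\in L\setminus\{0,1\}$, $I_e=\{x: x\parallel e\}$, and let $S_e$ be a t-conorm on $[e,1]$. Define $U_{S_e}(x,y)=S_e(x,y)$ on $[e,1]^2$; $y$ on $[e,1]\times I_e$; $x$ on $I_e\times[e,1]$; $0$ on $([0,e)\times I_e)\cup(I_e\times[0,e))$; $x\wedge y$ on $([0,e)\times[e,1])\cup([e,1]\times[0,e))\cup(I_e\times I_e)$; $x\vee y$ otherwise. If $U_{S_e}$ is increasing in each variable, then no element of $(0,e]$ lies below any element of $I_e$, i.e., $\{x\in(0,e): \exists z\in I_e,\ x\leq z\}=\emptyset$. -/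
/-!
If `⊥ < x < e` and `x ≤ z` with `z ∥ e`, then monotonicity of `U` in its first argument gives
`x = x ⊔ x = U x x ≤ U z x = ⊥`, which is absurd.
-/

section UninormOfTConorm

variable {L : Type*} [Lattice L] [OrderBot L] {e x z : L} {S : L → L → L}

open Classical in
noncomputable def uninormOfTConorm (e : L) (S : L → L → L) (x y : L) : L :=
  if e ≤ x ∧ e ≤ y then S x y
  else if e ≤ x ∧ (¬ y ≤ e ∧ ¬ e ≤ y) then y
  else if (¬ x ≤ e ∧ ¬ e ≤ x) ∧ e ≤ y then x
  else if (x < e ∧ (¬ y ≤ e ∧ ¬ e ≤ y)) ∨ ((¬ x ≤ e ∧ ¬ e ≤ x) ∧ y < e) then ⊥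
  else if (x < e ∧ e ≤ y) ∨ (e ≤ x ∧ y < e) ∨
      ((¬ x ≤ e ∧ ¬ e ≤ x) ∧ (¬ y ≤ e ∧ ¬ e ≤ y)) then x ⊓ y
  else x ⊔ y

theorem uninormOfTConorm_self_of_lt (hx : x < e) : uninormOfTConorm e S x x = x := by
  have hex : ¬ e ≤ x := hx.not_ge
  have hxe : x ≤ e := hx.le
  simp [uninormOfTConorm, hex, hxe]

theorem uninormOfTConorm_of_incomparable_of_lt (hz : ¬ z ≤ e ∧ ¬ e ≤ z) (hx : x < e) :
    uninormOfTConorm e S z x = ⊥ := by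
  have hex : ¬ e ≤ x := hx.not_ge
  simp [uninormOfTConorm, hz, hx, hex]

end UninormOfTConorm

open Classical in
theorem stmt15_general {L : Type*} [Lattice L] [BoundedOrder L] (e : L)
    (S : L → L → L)
    (U : L → L → L)
    (hU : ∀ x y, U x y =
      if e ≤ x ∧ e ≤ y then S x y
      else if e ≤ x ∧ (¬ y ≤ e ∧ ¬ e ≤ y) then y
      else if (¬ x ≤ e ∧ ¬ e ≤ x) ∧ e ≤ y then x
      else if (x < e ∧ (¬ y ≤ e ∧ ¬ e ≤ y)) ∨ ((¬ x ≤ e ∧ ¬ e ≤ x) ∧ y < e) then (⊥ : L)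
      else if (x < e ∧ e ≤ y) ∨ (e ≤ x ∧ y < e) ∨
          ((¬ x ≤ e ∧ ¬ e ≤ x) ∧ (¬ y ≤ e ∧ ¬ e ≤ y)) then x ⊓ y
      else x ⊔ y)
    (hmono : ∀ x y z, x ≤ y → U x z ≤ U y z ∧ U z x ≤ U z y) :
    ∀ x, ⊥ < x → x < e → ∀ z, (¬ z ≤ e ∧ ¬ e ≤ z) → ¬ x ≤ z := by
  obtain rfl : U = uninormOfTConorm e S := funext₂ hU
  intro x hx0 hxe z hz hxz
  have hx_le_bot : x ≤ ⊥ := by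
    simpa only [uninormOfTConorm_self_of_lt hxe, uninormOfTConorm_of_incomparable_of_lt hz hxe]
      using (hmono x z x hxz).1
  exact hx0.ne' (le_bot_iff.mp hx_le_bot)

open Classical in
theorem stmt15 {L : Type*} [Lattice L] [BoundedOrder L] (e : L)
    (he0 : e ≠ ⊥) (he1 : e ≠ ⊤)
    (S : L → L → L)
    (hScl : ∀ x y, e ≤ x → e ≤ y → e ≤ S x y)
    (hScomm : ∀ x y, e ≤ x → e ≤ y → S x y = S y x)
    (hSassoc : ∀ x y z, e ≤ x → e ≤ y → e ≤ z → S (S x y) z = S x (S y z))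
    (hSmono : ∀ x y z, e ≤ x → e ≤ y → e ≤ z → x ≤ y → S x z ≤ S y z)
    (hSe : ∀ x, e ≤ x → S e x = x ∧ S x e = x)
    (U : L → L → L)
    (hU : ∀ x y, U x y =
      if e ≤ x ∧ e ≤ y then S x y
      else if e ≤ x ∧ (¬ y ≤ e ∧ ¬ e ≤ y) then y
      else if (¬ x ≤ e ∧ ¬ e ≤ x) ∧ e ≤ y then x
      else if (x < e ∧ (¬ y ≤ e ∧ ¬ e ≤ y)) ∨ ((¬ x ≤ e ∧ ¬ e ≤ x) ∧ y < e) then (⊥ : L)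
      else if (x < e ∧ e ≤ y) ∨ (e ≤ x ∧ y < e) ∨
          ((¬ x ≤ e ∧ ¬ e ≤ x) ∧ (¬ y ≤ e ∧ ¬ e ≤ y)) then x ⊓ y
      else x ⊔ y)
    (hmono : ∀ x y z, x ≤ y → U x z ≤ U y z ∧ U z x ≤ U z y) :
    ∀ x, ⊥ < x → x < e → ∀ z, (¬ z ≤ e ∧ ¬ e ≤ z) → ¬ x ≤ z :=
  stmt15_general e S U hU hmono
end
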